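/- Let A be a finite set with |A| = n+1 ≥ 6, and let (x_μ)_{μ∈A} be a family where x_μ is a tree without bivalent vertices with leaves labelled by A \ {μ}, satisfying ∂_α x_β = ∂_β x_α for all distinct α, β ∈ A. If there exist distinct labels α, β ∈ A such that the leaves α, β are non-adjacent in x_μ for every μ ∈ A \ {α, β}, then there exists a unique tree y with leaves labelled by A such that ∂_μ y = x_μ for all μ ∈ A. -/

import Mathlib

set_option linter.unusedSectionVars false

/-- A tree without bivalent vertices whose leaves are labelled bijectively by `A`,
encoded (via the split-equivalence theorem) by its set of splits: each internal
edge of the tree determines the bipartition of the leaf set into the leaves on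
its two sides; both sides have at least two elements and any two splits are
compatible (some pair of opposite sides is disjoint). -/
structure LTree (A : Type*) [Fintype A] [DecidableEq A] where
  splits : Finset (Finset A)
  compl_mem : ∀ B ∈ splits, Bᶜ ∈ splits
  two_le : ∀ B ∈ splits, 2 ≤ B.card
  two_le_compl : ∀ B ∈ splits, 2 ≤ Bᶜ.card
  compat : ∀ B ∈ splits, ∀ C ∈ splits,
    B ∩ C = ∅ ∨ B ∩ Cᶜ = ∅ ∨ Bᶜ ∩ C = ∅ ∨ Bᶜ ∩ Cᶜ = ∅

namespace LTree

variable {A B : Type*} [Fintype A] [DecidableEq A] [Fintype B] [DecidableEq B]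

@[ext] theorem ext' {t t' : LTree A} (h : t.splits = t'.splits) : t = t' := by
  cases t; cases t'; simpa using h

private lemma image_compl (e : A ≃ B) (S : Finset A) :
    (S.image e)ᶜ = Sᶜ.image e := by
  ext b
  simp only [Finset.mem_compl, Finset.mem_image]
  constructor
  · intro h
    exact ⟨e.symm b, fun hm => h ⟨e.symm b, hm, e.apply_symm_apply b⟩, e.apply_symm_apply b⟩
  · rintro ⟨a, ha, rfl⟩ ⟨a', ha', he⟩
    exact ha (e.injective he ▸ ha')

/-- Relabelling the leaves of a tree along a bijection of the label sets. -/
def relabel (e : A ≃ B) (t : LTree A) : LTree B where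
  splits := t.splits.image (Finset.image e)
  compl_mem := by
    simp only [Finset.mem_image, forall_exists_index, and_imp]
    rintro _ C hC rfl
    exact ⟨Cᶜ, t.compl_mem C hC, (image_compl e C).symm⟩
  two_le := by
    simp only [Finset.mem_image, forall_exists_index, and_imp]
    rintro _ C hC rfl
    rw [Finset.card_image_of_injective _ e.injective]
    exact t.two_le C hC
  two_le_compl := by
    simp only [Finset.mem_image, forall_exists_index, and_imp]
    rintro _ C hC rfl
    rw [image_compl e C, Finset.card_image_of_injective _ e.injective]
    exact t.two_le_compl C hC
  compat := by
    simp only [Finset.mem_image, forall_exists_index, and_imp]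
    rintro _ C hC rfl _ D hD rfl
    have key : ∀ S T : Finset A, S ∩ T = ∅ → (S.image e) ∩ (T.image e) = ∅ := by
      intro S T h
      rw [← Finset.image_inter _ _ e.injective, h, Finset.image_empty]
    rw [image_compl e C, image_compl e D]
    rcases t.compat C hC D hD with h | h | h | h
    · exact Or.inl (key _ _ h)
    · exact Or.inr (Or.inl (key _ _ h))
    · exact Or.inr (Or.inr (Or.inl (key _ _ h)))
    · exact Or.inr (Or.inr (Or.inr (key _ _ h)))

private lemma subtype_compl (μ : A) (S : Finset A) :
    (S.subtype (· ≠ μ))ᶜ = Sᶜ.subtype (· ≠ μ) := by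
  ext a
  simp [Finset.mem_subtype]

private lemma subtype_inter (μ : A) (S T : Finset A) :
    (S.subtype (· ≠ μ)) ∩ (T.subtype (· ≠ μ)) = (S ∩ T).subtype (· ≠ μ) := by
  ext a
  simp [Finset.mem_subtype]

/-- The map `∂_μ`: erase the leaf labelled `μ` (and smooth out any resulting
bivalent vertex).  In the split encoding this restricts every split to
`A \ {μ}` and discards the splits that become degenerate. -/
def del (t : LTree A) (μ : A) : LTree {a : A // a ≠ μ} where
  splits := (t.splits.image (fun C => C.subtype (· ≠ μ))).filter
      (fun C => 2 ≤ C.card ∧ 2 ≤ Cᶜ.card)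
  compl_mem := by
    simp only [Finset.mem_filter, Finset.mem_image, forall_exists_index, and_imp]
    rintro _ C hC rfl h1 h2
    refine ⟨⟨Cᶜ, t.compl_mem C hC, (subtype_compl μ C).symm⟩, ?_, ?_⟩
    · exact h2
    · rwa [compl_compl]
  two_le := fun C hC => ((Finset.mem_filter.mp hC).2).1
  two_le_compl := fun C hC => ((Finset.mem_filter.mp hC).2).2
  compat := by
    simp only [Finset.mem_filter, Finset.mem_image, forall_exists_index, and_imp]
    rintro _ C hC rfl - - _ D hD rfl - -
    have key : ∀ S T : Finset A, S ∩ T = ∅ →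
        (S.subtype (· ≠ μ)) ∩ (T.subtype (· ≠ μ)) = ∅ := by
      intro S T h
      rw [subtype_inter, h]
      ext a
      simp [Finset.mem_subtype]
    rw [subtype_compl μ C, subtype_compl μ D]
    rcases t.compat C hC D hD with h | h | h | h
    · exact Or.inl (key _ _ h)
    · exact Or.inr (Or.inl (key _ _ h))
    · exact Or.inr (Or.inr (Or.inl (key _ _ h)))
    · exact Or.inr (Or.inr (Or.inr (key _ _ h)))

/-- `S` is a "block" of `t`: the set of leaves hanging off a single edge,
i.e. either a single leaf or one side of an internal edge. -/
def Block (t : LTree A) (S : Finset A) : Prop := S.card = 1 ∨ S ∈ t.splits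

/-- Two leaves `α`, `β` of `t` are adjacent if either they are attached to the
same vertex (no split separates them), or their attachment vertices are both
trivalent and joined by an edge (there is a split separating them such that on
each side, removing the leaf leaves a single block). -/
def Adjacent (t : LTree A) (α β : A) : Prop :=
  (∀ C ∈ t.splits, (α ∈ C ↔ β ∈ C)) ∨
  ∃ C ∈ t.splits, α ∈ C ∧ β ∉ C ∧ t.Block (C.erase α) ∧ t.Block (Cᶜ.erase β)

end LTree

/-- The elements of `A` different from both `α` and `β`, obtained by two
successive subtype constructions, identified with the evident subtype. -/
def delTwoEquiv {A : Type*} [DecidableEq A] (α β : A) (h : β ≠ α) :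
    {y : {a : A // a ≠ α} // y ≠ (⟨β, h⟩ : {a : A // a ≠ α})} ≃ {a : A // a ≠ α ∧ a ≠ β} where
  toFun y := ⟨y.1.1, y.1.2, fun hb => y.2 (Subtype.ext hb)⟩
  invFun a := ⟨⟨a.1, a.2.1⟩, fun he => a.2.2 (congrArg Subtype.val he)⟩
  left_inv := fun _ => rfl
  right_inv := fun _ => rfl

/-!
A tree is encoded by its splits, so the filler must consist of the bipartitions `B | Bᶜ` of `A`
whose restriction to `A \ {μ}` is, for every `μ`, either degenerate or a split of `x μ`.
Two such bipartitions cannot cross: if they did, a leaf `μ` in a cell of the crossing would see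
both of them as splits of `x μ`, and compatibility of the splits of `x μ` squeezes that cell down
to `{μ}`; so all four cells would be singletons and `|A| = 4`.
Every split `D | E` of `x μ` lifts to `D | E ∪ {μ}` or to `D ∪ {μ} | E`: the identity
`∂_ν x_μ = ∂_μ x_ν` shows that each face `x ν` contains one of the two lifts, and when `|E| ≥ 3`
a crossing argument inside the faces shows that the choice is the same for all faces.
Uniqueness holds because a split with a side of at least three leaves is seen, up to one leaf,
in the faces at two leaves of that side, and only the split itself fits both.
-/

open Finset

namespace Finset

variable {α : Type*} [DecidableEq α]

theorem card_subtype_ne (s : Finset α) (a : α) : (s.subtype (· ≠ a)).card = (s.erase a).card := by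
  rw [card_subtype, filter_ne']

theorem subtype_ne_insert_self (s : Finset α) (a : α) :
    (insert a s).subtype (· ≠ a) = s.subtype (· ≠ a) := by
  ext ⟨b, hb⟩
  simp [hb]

theorem subtype_ne_eq_iff {s t : Finset α} {a : α} :
    s.subtype (· ≠ a) = t.subtype (· ≠ a) ↔ s.erase a = t.erase a := by
  simp only [Finset.ext_iff, mem_subtype, mem_erase, Subtype.forall]
  exact ⟨fun h b => and_congr_right (h b), fun h b hb => by simpa [hb] using h b⟩

theorem subtype_map_subtype {p : α → Prop} [DecidablePred p] (s : Finset {a // p a}) :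
    (s.map (Function.Embedding.subtype p)).subtype p = s := by
  ext ⟨b, hb⟩
  simp [hb]

theorem card_subtype_ne_and_ne (s : Finset α) (a b : α) :
    (s.subtype fun c => c ≠ a ∧ c ≠ b).card = ((s.erase a).erase b).card := by
  rw [card_subtype]
  congr 1
  ext c
  simp only [mem_filter, mem_erase]
  tauto

variable [Fintype α]

theorem compl_subtype (p : α → Prop) [DecidablePred p] (s : Finset α) :
    (s.subtype p)ᶜ = sᶜ.subtype p := by
  ext
  simp

theorem card_inter_add_card_inter_compl (s t : Finset α) :
    (s ∩ t).card + (s ∩ tᶜ).card = s.card := by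
  rw [← sdiff_eq_inter_compl, card_inter_add_card_sdiff]

def Crosses (B C : Finset α) : Prop :=
  (B ∩ C).Nonempty ∧ (B ∩ Cᶜ).Nonempty ∧ (Bᶜ ∩ C).Nonempty ∧ (Bᶜ ∩ Cᶜ).Nonempty

theorem not_crosses_iff {B C : Finset α} :
    ¬ Crosses B C ↔ B ∩ C = ∅ ∨ B ∩ Cᶜ = ∅ ∨ Bᶜ ∩ C = ∅ ∨ Bᶜ ∩ Cᶜ = ∅ := by
  simp only [Crosses, ← not_nonempty_iff_eq_empty]
  tauto

theorem Crosses.compl_left {B C : Finset α} (h : Crosses B C) : Crosses Bᶜ C := by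
  obtain ⟨h₁, h₂, h₃, h₄⟩ := h
  exact ⟨h₃, h₄, by rwa [compl_compl], by rwa [compl_compl]⟩

theorem Crosses.compl_right {B C : Finset α} (h : Crosses B C) : Crosses B Cᶜ := by
  obtain ⟨h₁, h₂, h₃, h₄⟩ := h
  exact ⟨h₂, by rwa [compl_compl], h₄, by rwa [compl_compl]⟩

theorem crosses_subtype_ne {B C : Finset α} {ν : α}
    (h₁ : ((B ∩ C).erase ν).Nonempty) (h₂ : ((B ∩ Cᶜ).erase ν).Nonempty)
    (h₃ : ((Bᶜ ∩ C).erase ν).Nonempty) (h₄ : ((Bᶜ ∩ Cᶜ).erase ν).Nonempty) :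
    Crosses (B.subtype (· ≠ ν)) (C.subtype (· ≠ ν)) := by
  have restrict : ∀ S T : Finset α, ((S ∩ T).erase ν).Nonempty →
      (S.subtype (· ≠ ν) ∩ T.subtype (· ≠ ν)).Nonempty := by
    rintro S T ⟨a, ha⟩
    rw [mem_erase, mem_inter] at ha
    exact ⟨⟨a, ha.1⟩, by simpa using ha.2⟩
  simp only [Crosses, compl_subtype]
  exact ⟨restrict _ _ h₁, restrict _ _ h₂, restrict _ _ h₃, restrict _ _ h₄⟩

end Finset

theorem Equiv.image_subtype_subtype_ne {A : Type*} [DecidableEq A] {p : A → Prop}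
    [DecidablePred p] {μ ν : A} (h : ν ≠ μ)
    (e : {y : {a : A // a ≠ μ} // y ≠ ⟨ν, h⟩} ≃ {a // p a}) (he : ∀ y, (e y : A) = y.1)
    (B : Finset A) :
    ((B.subtype (· ≠ μ)).subtype (· ≠ ⟨ν, h⟩)).image e = B.subtype p := by
  ext a
  simp only [mem_image, mem_subtype]
  constructor
  · rintro ⟨y, hy, rfl⟩
    rwa [he]
  · intro ha
    exact ⟨e.symm a, by rwa [← he, e.apply_symm_apply], e.apply_symm_apply a⟩

namespace LTree

section General

variable {X Y Z : Type*} [Fintype X] [DecidableEq X] [Fintype Y] [DecidableEq Y]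
  [Fintype Z] [DecidableEq Z]

theorem not_crosses (t : LTree X) {B C : Finset X} (hB : B ∈ t.splits) (hC : C ∈ t.splits) :
    ¬ Crosses B C :=
  not_crosses_iff.2 (t.compat B hB C hC)

theorem relabel_relabel (t : LTree X) (e : X ≃ Y) (e' : Y ≃ Z) :
    (t.relabel e).relabel e' = t.relabel (e.trans e') := by
  ext1
  simp [relabel, image_image, Function.comp_def]

theorem mem_del_splits {t : LTree X} {μ : X} {C : Finset {a // a ≠ μ}} :
    C ∈ (t.del μ).splits ↔ 2 ≤ C.card ∧ 2 ≤ Cᶜ.card ∧ ∃ B ∈ t.splits, B.subtype (· ≠ μ) = C := by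
  simp only [del, mem_filter, mem_image]
  tauto

end General

variable {A : Type*} [Fintype A] [DecidableEq A]

def HasSplit {ν : A} (t : LTree {a : A // a ≠ ν}) (B : Finset A) : Prop :=
  B.subtype (· ≠ ν) ∈ t.splits

section HasSplit

variable {ν : A} {t : LTree {a : A // a ≠ ν}} {B C : Finset A}

theorem hasSplit_congr (h : ∀ a ≠ ν, a ∈ B ↔ a ∈ C) : t.HasSplit B ↔ t.HasSplit C := by
  have : B.subtype (· ≠ ν) = C.subtype (· ≠ ν) := by
    ext ⟨a, ha⟩
    simpa using h a ha
  rw [HasSplit, HasSplit, this]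

theorem hasSplit_insert_self : t.HasSplit (insert ν B) ↔ t.HasSplit B := by
  rw [HasSplit, HasSplit, subtype_ne_insert_self]

theorem hasSplit_erase_self : t.HasSplit (B.erase ν) ↔ t.HasSplit B :=
  hasSplit_congr fun a ha => by simp [ha]

theorem HasSplit.compl (h : t.HasSplit B) : t.HasSplit Bᶜ := by
  rw [HasSplit, ← compl_subtype]
  exact t.compl_mem _ h

theorem HasSplit.two_le_card_erase (h : t.HasSplit B) : 2 ≤ (B.erase ν).card := by
  rw [← card_subtype_ne]
  exact t.two_le _ h

end HasSplit

end LTree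

section

open LTree

variable {A : Type*} [Fintype A] [DecidableEq A]

/-- The hypothesis `∂_α x_β = ∂_β x_α` of the theorem. -/
def Compatible (x : ∀ μ : A, LTree {a : A // a ≠ μ}) : Prop :=
  ∀ (α β : A) (h : α ≠ β),
    ((x β).del ⟨α, h⟩).relabel (delTwoEquiv β α h) =
      ((((x α).del ⟨β, h.symm⟩).relabel (delTwoEquiv α β h.symm)).relabel
        (Equiv.subtypeEquivRight (fun _ => and_comm)))

theorem LTree.subtype_mem_relabel_del_iff {p : A → Prop} [DecidablePred p] {μ ν : A}
    (h : ν ≠ μ) (t : LTree {a : A // a ≠ μ})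
    (e : {y : {a : A // a ≠ μ} // y ≠ ⟨ν, h⟩} ≃ {a // p a}) (he : ∀ y, (e y : A) = y.1)
    (B : Finset A) :
    B.subtype p ∈ ((t.del ⟨ν, h⟩).relabel e).splits ↔
      2 ≤ (B.subtype p).card ∧ 2 ≤ (B.subtype p)ᶜ.card ∧
        ∃ C : Finset A, t.HasSplit C ∧ C.subtype p = B.subtype p := by
  have hcard : ∀ c : Finset {y : {a : A // a ≠ μ} // y ≠ ⟨ν, h⟩}, (c.image e).card = c.card :=
    fun c => card_image_of_injective c e.injective
  have hcompl : ∀ c : Finset {y : {a : A // a ≠ μ} // y ≠ ⟨ν, h⟩}, (c.image e)ᶜ = cᶜ.image e :=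
    image_compl e
  have himage := e.image_subtype_subtype_ne h he
  constructor
  · rintro hd
    obtain ⟨c, hc, hce⟩ := mem_image.1 hd
    obtain ⟨h₁, h₂, C₀, hC₀, rfl⟩ := mem_del_splits.1 hc
    refine ⟨by rwa [← hce, hcard], by rwa [← hce, hcompl, hcard], C₀.map (.subtype _), ?_, ?_⟩
    · rwa [HasSplit, subtype_map_subtype]
    · rw [← himage, subtype_map_subtype, hce]
  · rintro ⟨h₁, h₂, C, hC, hCB⟩
    refine mem_image.2 ⟨_, mem_del_splits.2 ⟨?_, ?_, _, hC, rfl⟩, by rw [himage, hCB]⟩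
    · rwa [← hcard, himage, hCB]
    · rwa [← hcard, ← hcompl, himage, hCB]

theorem Compatible.hasSplit_or_hasSplit_insert {x : ∀ μ : A, LTree {a : A // a ≠ μ}}
    (hx : Compatible x) {μ ν : A} (h : ν ≠ μ) {B : Finset A} (hμB : μ ∉ B)
    (hB : (x μ).HasSplit B) (h₁ : 2 ≤ (B.erase ν).card)
    (h₂ : 2 ≤ ((Bᶜ.erase μ).erase ν).card) :
    (x ν).HasSplit B ∨ (x ν).HasSplit (insert μ B) := by
  have hμ := (subtype_mem_relabel_del_iff h (x μ) (delTwoEquiv μ ν h) (fun _ => rfl) B).2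
    ⟨by rwa [card_subtype_ne_and_ne, erase_eq_of_notMem hμB],
      by rwa [compl_subtype, card_subtype_ne_and_ne], B, hB, rfl⟩
  rw [hx ν μ h, relabel_relabel] at hμ
  obtain ⟨-, -, C, hC, hCB⟩ :=
    (subtype_mem_relabel_del_iff h.symm (x ν) _ (fun _ => rfl) B).1 hμ
  have hagree : ∀ a, a ≠ μ → a ≠ ν → (a ∈ C ↔ a ∈ B) := fun a haμ haν => by
    simpa using congrArg (⟨a, haμ, haν⟩ ∈ ·) hCB
  by_cases hμC : μ ∈ C
  · refine .inr ((hasSplit_congr fun a haν => ?_).1 hC)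
    rcases eq_or_ne a μ with rfl | haμ
    · simp [hμC]
    · simp [haμ, hagree a haμ haν]
  · refine .inl ((hasSplit_congr fun a haν => ?_).1 hC)
    rcases eq_or_ne a μ with rfl | haμ
    · simp [hμC, hμB]
    · exact hagree a haμ haν

section Filler

variable {x : ∀ μ : A, LTree {a : A // a ≠ μ}} {B C : Finset A}

def FillerSplit (x : ∀ μ : A, LTree {a : A // a ≠ μ}) (B : Finset A) : Prop :=
  2 ≤ B.card ∧ 2 ≤ Bᶜ.card ∧
    ∀ μ, 2 ≤ (B.erase μ).card → 2 ≤ (Bᶜ.erase μ).card → (x μ).HasSplit B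

theorem FillerSplit.compl (h : FillerSplit x B) : FillerSplit x Bᶜ := by
  obtain ⟨h₁, h₂, h₃⟩ := h
  refine ⟨h₂, by rwa [compl_compl], fun μ hμ₁ hμ₂ => ?_⟩
  exact (h₃ μ (by rwa [compl_compl] at hμ₂) hμ₁).compl

theorem FillerSplit.card_inter_le_one (hB : FillerSplit x B) (hC : FillerSplit x C)
    (hBC : Crosses B C) : (B ∩ C).card ≤ 1 := by
  obtain ⟨-, ⟨b, hb⟩, ⟨c, hc⟩, ⟨d, hd⟩⟩ := hBC
  rw [mem_inter, mem_compl] at hb hc hd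
  by_cases hB3 : B.card ≤ 2
  · have := card_inter_add_card_inter_compl B C
    have : 0 < (B ∩ Cᶜ).card := card_pos.2 ⟨b, by simpa using hb⟩
    omega
  by_cases hC3 : C.card ≤ 2
  · have hsum := card_inter_add_card_inter_compl C B
    have : 0 < (C ∩ Bᶜ).card := card_pos.2 ⟨c, by simpa using hc.symm⟩
    rw [inter_comm] at hsum
    omega
  refine card_le_one.2 fun a ha μ hμ => by_contra fun haμ => ?_
  rw [mem_inter] at ha hμ
  have hxB : (x μ).HasSplit B := hB.2.2 μ (by rw [card_erase_of_mem hμ.1]; omega)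
    (by rw [erase_eq_of_notMem (by simpa using hμ.1)]; exact hB.2.1)
  have hxC : (x μ).HasSplit C := hC.2.2 μ (by rw [card_erase_of_mem hμ.2]; omega)
    (by rw [erase_eq_of_notMem (by simpa using hμ.2)]; exact hC.2.1)
  refine (x μ).not_crosses hxB hxC (crosses_subtype_ne ⟨a, ?_⟩ ⟨b, ?_⟩ ⟨c, ?_⟩ ⟨d, ?_⟩)
  · simp [haμ, ha]
  · simp [hb, show b ≠ μ by rintro rfl; exact hb.2 hμ.2]
  · simp [hc, show c ≠ μ by rintro rfl; exact hc.1 hμ.1]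
  · simp [hd, show d ≠ μ by rintro rfl; exact hd.1 hμ.1]

theorem FillerSplit.not_crosses (hcard : 5 ≤ Fintype.card A) (hB : FillerSplit x B)
    (hC : FillerSplit x C) : ¬ Crosses B C := fun hBC => by
  have := hB.card_inter_le_one hC hBC
  have := hB.card_inter_le_one hC.compl hBC.compl_right
  have := hB.compl.card_inter_le_one hC hBC.compl_left
  have := hB.compl.card_inter_le_one hC.compl hBC.compl_left.compl_right
  have := card_inter_add_card_inter_compl B C
  have := card_inter_add_card_inter_compl Bᶜ C
  have := card_add_card_compl B
  omega

variable (x) in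
open Classical in
noncomputable def filler (hcard : 5 ≤ Fintype.card A) : LTree A where
  splits := univ.filter (FillerSplit x)
  compl_mem _ hB := mem_filter.2 ⟨mem_univ _, (mem_filter.1 hB).2.compl⟩
  two_le _ hB := (mem_filter.1 hB).2.1
  two_le_compl _ hB := (mem_filter.1 hB).2.2.1
  compat _ hB _ hC := not_crosses_iff.1 ((mem_filter.1 hB).2.not_crosses hcard (mem_filter.1 hC).2)

theorem mem_filler_splits {hcard : 5 ≤ Fintype.card A} :
    B ∈ (filler x hcard).splits ↔ FillerSplit x B := by
  simp [filler]

end Filler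

section Lift

variable {x : ∀ μ : A, LTree {a : A // a ≠ μ}} {μ ν l l' : A} {D : Finset A}

theorem Compatible.hasSplit_of_hasSplit_insert (hx : Compatible x) (hμD : μ ∉ D)
    (hE : 3 ≤ (Dᶜ.erase μ).card) (hνμ : ν ≠ μ) (hν : 2 ≤ (D.erase ν).card)
    (hins : (x ν).HasSplit (insert μ D)) (hlD : l ∉ D) (hlμ : l ≠ μ) (hlν : l ≠ ν)
    (hl : (x l).HasSplit D) : (x ν).HasSplit D := by
  obtain ⟨w, hw⟩ : (((Dᶜ.erase μ).erase l).erase ν).Nonempty := by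
    have := pred_card_le_card_erase (s := Dᶜ.erase μ) (a := l)
    have := pred_card_le_card_erase (s := (Dᶜ.erase μ).erase l) (a := ν)
    rw [← card_pos]
    omega
  simp only [mem_erase, mem_compl] at hw
  obtain ⟨a, ha⟩ : (D.erase ν).Nonempty := by
    rw [← card_pos]
    omega
  rw [mem_erase] at ha
  have hcard : 2 ≤ ((Dᶜ.erase l).erase ν).card :=
    one_lt_card.2 ⟨μ, by simp [hμD, hlμ.symm, hνμ.symm], w, by simp [hw], hw.2.2.1.symm⟩
  refine (hx.hasSplit_or_hasSplit_insert hlν.symm hlD hl hν hcard).resolve_right fun hlins =>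
    (x ν).not_crosses hlins hins (crosses_subtype_ne ⟨a, ?_⟩ ⟨l, ?_⟩ ⟨μ, ?_⟩ ⟨w, ?_⟩)
  · simp [ha]
  · simp [hlν, hlμ, hlD]
  · simp [hνμ.symm, hlμ.symm, hμD]
  · simp [hw]

theorem Compatible.hasSplit_insert_of_mem (hx : Compatible x) (hμD : μ ∉ D) (hD : 2 ≤ D.card)
    (hE : 3 ≤ (Dᶜ.erase μ).card) (hνD : ν ∈ D) (hl : l ∈ Dᶜ.erase μ) (hl' : l' ∈ Dᶜ.erase μ)
    (hll' : l ≠ l') (hxl : (x l).HasSplit (insert μ D)) (hxl' : (x l').HasSplit (insert μ D)) :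
    (x ν).HasSplit (insert μ D) := by
  by_contra hν
  have grow : ∀ k ∈ Dᶜ.erase μ, (x k).HasSplit (insert μ D) →
      (x ν).HasSplit (insert k (insert μ D)) := by
    intro k hk hxk
    obtain ⟨hkμ, hkD⟩ : k ≠ μ ∧ k ∉ D := by simpa using hk
    have hνk : ν ≠ k := by rintro rfl; exact hkD hνD
    refine (hx.hasSplit_or_hasSplit_insert hνk (by simp [hkμ, hkD]) hxk ?_ ?_).resolve_left hν
    · rw [erase_insert_of_ne (by rintro rfl; exact hμD hνD), card_insert_of_notMem
        (fun h => hμD (mem_of_mem_erase h)), card_erase_of_mem hνD]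
      omega
    · rw [compl_insert, erase_eq_of_notMem (by simp [hνD]), card_erase_of_mem hk]
      omega
  obtain ⟨w, hw⟩ : (((Dᶜ.erase μ).erase l).erase l').Nonempty := by
    have := pred_card_le_card_erase (s := Dᶜ.erase μ) (a := l)
    have := pred_card_le_card_erase (s := (Dᶜ.erase μ).erase l) (a := l')
    rw [← card_pos]
    omega
  simp only [mem_erase, mem_compl] at hw hl hl'
  have hνμ : ν ≠ μ := by rintro rfl; exact hμD hνD
  refine (x ν).not_crosses (grow l (by simp [hl]) hxl) (grow l' (by simp [hl']) hxl')
    (crosses_subtype_ne ⟨μ, ?_⟩ ⟨l, ?_⟩ ⟨l', ?_⟩ ⟨w, ?_⟩)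
  · simp [hνμ.symm]
  · simp [hll', hl, show l ≠ ν by rintro rfl; exact hl.2 hνD]
  · simp [hll'.symm, hl', show l' ≠ ν by rintro rfl; exact hl'.2 hνD]
  · simp [hw, show w ≠ ν by rintro rfl; exact hw.2.2.2 hνD]

theorem Compatible.fillerSplit_or_of_three_le (hx : Compatible x) (hμD : μ ∉ D)
    (hD : (x μ).HasSplit D) (hE : 3 ≤ (Dᶜ.erase μ).card) :
    FillerSplit x D ∨ FillerSplit x (insert μ D) := by
  have hD2 : 2 ≤ D.card := by simpa [erase_eq_of_notMem hμD] using hD.two_le_card_erase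
  have keep_or_add : ∀ ν, ν ≠ μ → 2 ≤ (D.erase ν).card →
      (x ν).HasSplit D ∨ (x ν).HasSplit (insert μ D) := fun ν hνμ hν =>
    hx.hasSplit_or_hasSplit_insert hνμ hμD hD hν
      (by have := pred_card_le_card_erase (s := Dᶜ.erase μ) (a := ν); omega)
  by_cases hkeep : ∀ ν, ν ≠ μ → 2 ≤ (D.erase ν).card → (x ν).HasSplit D
  · refine .inl ⟨hD2, ?_, fun ν hν _ => ?_⟩
    · have := card_erase_le (s := Dᶜ) (a := μ)
      omega
    · rcases eq_or_ne ν μ with rfl | hνμ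
      exacts [hD, hkeep ν hνμ hν]
  push Not at hkeep
  obtain ⟨ν₁, hν₁μ, hν₁, hν₁D⟩ := hkeep
  have hins₁ := (keep_or_add ν₁ hν₁μ hν₁).resolve_left hν₁D
  have houter : ∀ l ∈ Dᶜ.erase μ, (x l).HasSplit (insert μ D) := by
    intro l hl
    obtain ⟨hlμ, hlD⟩ : l ≠ μ ∧ l ∉ D := by simpa using hl
    rcases eq_or_ne l ν₁ with rfl | hlν₁
    · exact hins₁
    refine (keep_or_add l hlμ (by rwa [erase_eq_of_notMem hlD])).resolve_left fun hxl => hν₁D ?_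
    exact hx.hasSplit_of_hasSplit_insert hμD hE hν₁μ hν₁ hins₁ hlD hlμ hlν₁ hxl
  obtain ⟨l, hl, l', hl', hll'⟩ := one_lt_card.1 (by omega : 1 < (Dᶜ.erase μ).card)
  refine .inr ⟨by rw [card_insert_of_notMem hμD]; omega, by rw [compl_insert]; omega,
    fun ν _ _ => ?_⟩
  by_cases hνD : ν ∈ D
  · exact hx.hasSplit_insert_of_mem hμD hD2 hE hνD hl hl' hll' (houter l hl) (houter l' hl')
  rcases eq_or_ne ν μ with rfl | hνμ
  · exact hasSplit_insert_self.2 hD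
  · exact houter ν (by simp [hνμ, hνD])

theorem Compatible.fillerSplit_or_insert (hx : Compatible x) (hcard : 6 ≤ Fintype.card A)
    (hμD : μ ∉ D) (hD : (x μ).HasSplit D) :
    FillerSplit x D ∨ FillerSplit x (insert μ D) := by
  by_cases hE : 3 ≤ (Dᶜ.erase μ).card
  · exact hx.fillerSplit_or_of_three_le hμD hD hE
  -- the other side `Dᶜ.erase μ` has only two leaves, so lift it instead
  have hEc : (Dᶜ.erase μ)ᶜ = insert μ D := by rw [compl_erase, compl_compl]
  have hE3 : 3 ≤ ((Dᶜ.erase μ)ᶜ.erase μ).card := by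
    have := card_add_card_compl D
    have := card_erase_of_mem (mem_compl.2 hμD)
    rw [hEc, erase_insert hμD]
    omega
  rcases hx.fillerSplit_or_of_three_le (notMem_erase μ _) (hasSplit_erase_self.2 hD.compl) hE3
    with h | h
  · exact .inr (hEc ▸ h.compl)
  · have := h.compl
    rw [compl_insert, hEc, erase_insert hμD] at this
    exact .inl this

end Lift

theorem Compatible.del_filler {x : ∀ μ : A, LTree {a : A // a ≠ μ}} (hx : Compatible x)
    (hcard : 6 ≤ Fintype.card A) (μ : A) : (filler x (by omega)).del μ = x μ := by
  ext C
  rw [mem_del_splits]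
  constructor
  · rintro ⟨h₁, h₂, B, hB, rfl⟩
    exact (mem_filler_splits.1 hB).2.2 μ (by rwa [card_subtype_ne] at h₁)
      (by rwa [compl_subtype, card_subtype_ne] at h₂)
  · intro hC
    set D := C.map (.subtype _)
    have hDC : D.subtype (· ≠ μ) = C := subtype_map_subtype C
    refine ⟨(x μ).two_le C hC, (x μ).two_le_compl C hC, ?_⟩
    rcases hx.fillerSplit_or_insert hcard (notMem_map_subtype_of_not_property (a := μ) C (· rfl))
      (by rwa [HasSplit, hDC]) with h | h
    · exact ⟨D, mem_filler_splits.2 h, hDC⟩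
    · exact ⟨insert μ D, mem_filler_splits.2 h, by rw [subtype_ne_insert_self, hDC]⟩

namespace LTree

variable {y y' : LTree A} {B : Finset A}

theorem mem_or_erase_mem_of_del_eq {κ : A} (h : y.del κ = y'.del κ) (hB : B ∈ y.splits)
    (hκ : κ ∈ B) (h3 : 3 ≤ B.card) : B ∈ y'.splits ∨ B.erase κ ∈ y'.splits := by
  have hmem : B.subtype (· ≠ κ) ∈ (y.del κ).splits := by
    refine mem_del_splits.2 ⟨?_, ?_, B, hB, rfl⟩
    · rw [card_subtype_ne, card_erase_of_mem hκ]
      omega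
    · rw [compl_subtype, card_subtype_ne, erase_eq_of_notMem (by simpa using hκ)]
      exact y.two_le_compl B hB
  rw [h] at hmem
  obtain ⟨-, -, C, hC, hCB⟩ := mem_del_splits.1 hmem
  rw [subtype_ne_eq_iff] at hCB
  by_cases hκC : κ ∈ C
  · left
    rwa [← insert_erase hκ, ← hCB, insert_erase hκC]
  · right
    rwa [← hCB, erase_eq_of_notMem hκC]

theorem mem_splits_of_del_eq (h : ∀ κ, y.del κ = y'.del κ) (hB : B ∈ y.splits)
    (h3 : 3 ≤ B.card) : B ∈ y'.splits := by
  obtain ⟨μ, hμ, ν, hν, hμν⟩ := one_lt_card.1 (by omega : 1 < B.card)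
  obtain hB' | hμ' := mem_or_erase_mem_of_del_eq (h μ) hB hμ h3
  · exact hB'
  obtain hB' | hν' := mem_or_erase_mem_of_del_eq (h ν) hB hν h3
  · exact hB'
  obtain ⟨w, hw⟩ : ((B.erase μ).erase ν).Nonempty := by
    rw [← card_pos, card_erase_of_mem (mem_erase.2 ⟨hμν.symm, hν⟩), card_erase_of_mem hμ]
    omega
  obtain ⟨d, hd⟩ : Bᶜ.Nonempty := card_pos.1 (by have := y.two_le_compl B hB; omega)
  rw [mem_erase, mem_erase] at hw
  rw [mem_compl] at hd
  refine (y'.not_crosses hμ' hν' ⟨⟨w, ?_⟩, ⟨ν, ?_⟩, ⟨μ, ?_⟩, ⟨d, ?_⟩⟩).elim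
  · simp [hw]
  · simp [hμν.symm, hν]
  · simp [hμν, hμ]
  · simp [hd]

theorem eq_of_del_eq (hcard : 5 ≤ Fintype.card A) (h : ∀ μ, y.del μ = y'.del μ) : y = y' := by
  have subset : ∀ {z z' : LTree A}, (∀ μ, z.del μ = z'.del μ) → z.splits ⊆ z'.splits := by
    intro z z' hz B hB
    by_cases h3 : 3 ≤ B.card
    · exact mem_splits_of_del_eq hz hB h3
    · have := card_add_card_compl B
      have := z.two_le B hB
      simpa using z'.compl_mem _ (mem_splits_of_del_eq hz (z.compl_mem B hB) (by omega))
  exact ext' ((subset h).antisymm (subset fun μ => (h μ).symm))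

end LTree

end

theorem unique_filler_of_nonadjacent_pair_general {A : Type*} [Fintype A] [DecidableEq A]
    (hcard : 6 ≤ Fintype.card A)
    (x : ∀ μ : A, LTree {a : A // a ≠ μ})
    -- the simplicial compatibility `∂_α x_β = ∂_β x_α` for all distinct `α, β`,
    -- stated after identifying the label sets of the two sides with
    -- `{a : A // a ≠ β ∧ a ≠ α}` via the evident relabellings
    (hcompat : ∀ (α β : A) (h : α ≠ β),
      ((x β).del ⟨α, h⟩).relabel (delTwoEquiv β α h) =
        ((((x α).del ⟨β, h.symm⟩).relabel (delTwoEquiv α β h.symm)).relabel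
          (Equiv.subtypeEquivRight (fun a => and_comm))))
    (α β : A) :
    ∃! y : LTree A, ∀ μ : A, y.del μ = x μ := by
  have hx : Compatible x := hcompat
  refine ⟨filler x (by omega), hx.del_filler hcard, fun y hy => ?_⟩
  exact LTree.eq_of_del_eq (by omega) fun μ => (hy μ).trans (hx.del_filler hcard μ).symm

/-- Let `|A| = n + 1 ≥ 6` and let `(x_μ)` be a compatible
family of trees, `x_μ` having leaves labelled by `A \ {μ}`.  If there are
distinct labels `α, β` whose leaves are non-adjacent in `x_μ` for every
`μ ≠ α, β`, then there is a unique tree `y` with leaves labelled by `A`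
such that `∂_μ y = x_μ` for all `μ`. -/
theorem unique_filler_of_nonadjacent_pair {A : Type*} [Fintype A] [DecidableEq A]
    (hcard : 6 ≤ Fintype.card A)
    (x : ∀ μ : A, LTree {a : A // a ≠ μ})
    -- the simplicial compatibility `∂_α x_β = ∂_β x_α` for all distinct `α, β`,
    -- stated after identifying the label sets of the two sides with
    -- `{a : A // a ≠ β ∧ a ≠ α}` via the evident relabellings
    (hcompat : ∀ (α β : A) (h : α ≠ β),
      ((x β).del ⟨α, h⟩).relabel (delTwoEquiv β α h) =
        ((((x α).del ⟨β, h.symm⟩).relabel (delTwoEquiv α β h.symm)).relabel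
          (Equiv.subtypeEquivRight (fun a => and_comm))))
    (α β : A) (hαβ : α ≠ β)
    (hnonadj : ∀ (μ : A) (h1 : α ≠ μ) (h2 : β ≠ μ),
      ¬ (x μ).Adjacent ⟨α, h1⟩ ⟨β, h2⟩) :
    ∃! y : LTree A, ∀ μ : A, y.del μ = x μ :=
  unique_filler_of_nonadjacent_pair_general hcard x hcompat α β
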